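/- arXiv:1803.06087 — 6 statements merged into one kernel-verified Lean document; each statement's English description precedes it below -/
import Mathlib

section
/- For every (x,y) ∈ ℝ² with (x,y) ≠ (0,0), the inner product of the gradient of W at (x,y) with f₀(x,y) equals zero: ⟨∇W(x,y), f₀(x,y)⟩ = 0. -/
/-- `W(x,y) = (x⁴+y⁴)/(x²+y²)` for `(x,y) ≠ (0,0)`, and `W(0,0) = 0`. -/
noncomputable def W (p : ℝ × ℝ) : ℝ :=
  if p = 0 then 0 else (p.1 ^ 4 + p.2 ^ 4) / (p.1 ^ 2 + p.2 ^ 2)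

def a (x y : ℝ) : ℝ := 2 * x * (x ^ 4 + 2 * x ^ 2 * y ^ 2 - y ^ 4)

def b (x y : ℝ) : ℝ := 2 * y * (-x ^ 4 + 2 * x ^ 2 * y ^ 2 + y ^ 4)

def f0 (p : ℝ × ℝ) : ℝ × ℝ := (-b p.1 p.2, a p.1 p.2)

/-! Off the origin `W` is the quotient `(x⁴+y⁴)/(x²+y²)`, and the quotient rule gives
`∇W = (a, b) / (x²+y²)²`. Hence `f₀ = (-b, a)` is `∇W` rotated by a right angle, up to a
positive factor, and is orthogonal to it. -/

open ContinuousLinearMap Filter Topology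

theorem HasFDerivAt.div {𝕜 E : Type*} [NontriviallyNormedField 𝕜] [NormedAddCommGroup E]
    [NormedSpace 𝕜 E] {f g : E → 𝕜} {f' g' : E →L[𝕜] 𝕜} {x : E}
    (hf : HasFDerivAt f f' x) (hg : HasFDerivAt g g' x) (hx : g x ≠ 0) :
    HasFDerivAt (fun y => f y / g y) ((g x ^ 2)⁻¹ • (g x • f' - f x • g')) x := by
  have h := hf.mul ((hasFDerivAt_inv hx).comp x hg)
  rw [show (fun y => f y / g y) = f * ((·⁻¹) ∘ g) from funext fun y => div_eq_mul_inv _ _]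
  refine h.congr_fderiv (ContinuousLinearMap.ext fun v => ?_)
  simp only [Function.comp_apply, add_apply, smul_apply, comp_apply, toSpanSingleton_apply,
    smul_eq_mul, mul_neg, sub_apply]
  field_simp
  ring

theorem fst_sq_add_snd_sq_pos {p : ℝ × ℝ} (hp : p ≠ 0) : 0 < p.1 ^ 2 + p.2 ^ 2 := by
  rcases p with ⟨x, y⟩
  have hxy : x ≠ 0 ∨ y ≠ 0 := by
    rw [← not_and_or]
    rintro ⟨rfl, rfl⟩
    exact hp rfl
  rcases hxy with h | h <;> positivity

theorem W_eventuallyEq {p : ℝ × ℝ} (hp : p ≠ 0) :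
    W =ᶠ[𝓝 p] fun q => (q.1 ^ 4 + q.2 ^ 4) / (q.1 ^ 2 + q.2 ^ 2) := by
  filter_upwards [isOpen_compl_singleton.mem_nhds hp] with q hq
  exact if_neg hq

theorem hasFDerivAt_W {p : ℝ × ℝ} (hp : p ≠ 0) :
    HasFDerivAt W (((p.1 ^ 2 + p.2 ^ 2) ^ 2)⁻¹ •
      (a p.1 p.2 • fst ℝ ℝ ℝ + b p.1 p.2 • snd ℝ ℝ ℝ)) p := by
  have hfst : HasFDerivAt Prod.fst (fst ℝ ℝ ℝ) p := hasFDerivAt_fst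
  have hsnd : HasFDerivAt Prod.snd (snd ℝ ℝ ℝ) p := hasFDerivAt_snd
  have hquot := ((hfst.pow 4).add (hsnd.pow 4)).div ((hfst.pow 2).add (hsnd.pow 2))
    (fst_sq_add_snd_sq_pos hp).ne'
  refine (hquot.congr_of_eventuallyEq (W_eventuallyEq hp)).congr_fderiv
    (ContinuousLinearMap.ext fun v => ?_)
  simp only [Pi.add_apply, Nat.add_one_sub_one, nsmul_eq_mul, Nat.cast_ofNat, smul_add, pow_one,
    smul_apply, sub_apply, add_apply, coe_fst', smul_eq_mul, coe_snd', a, b]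
  ring

/-- For `(x,y) ≠ (0,0)`, the inner product of `∇W(x,y)` with `f₀(x,y)` (i.e. the
directional derivative of `W` along `f₀`) is zero. -/
theorem stmt4 :
    ∀ p : ℝ × ℝ, p ≠ 0 → fderiv ℝ W p (f0 p) = 0 := by
  intro p hp
  rw [(hasFDerivAt_W hp).fderiv]
  simp only [f0, smul_apply, add_apply, coe_fst', coe_snd', smul_eq_mul]
  ring
end

section
/- The origin is a globally asymptotically stable equilibrium of the system ẋ = f(x): (i) f(0,0) = (0,0); (ii) for every ε > 0 there exists δ > 0 such that every differentiable curve γ: [0,∞) → ℝ² satisfying γ'(t) = f(γ(t)) for all t ≥ 0 and ‖γ(0)‖ < δ satisfies ‖γ(t)‖ < ε for all t ≥ 0; and (iii) every differentiable curve γ: [0,∞) → ℝ² satisfying γ'(t) = f(γ(t)) for all t ≥ 0 satisfies γ(t) → (0,0) as t → ∞. -/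
def f1 (p : ℝ × ℝ) : ℝ × ℝ :=
  (-(p.1 ^ 2 + p.2 ^ 2) * a p.1 p.2, -(p.1 ^ 2 + p.2 ^ 2) * b p.1 p.2)

def f (p : ℝ × ℝ) : ℝ × ℝ := f0 p + f1 p

/-!
The ratio `V = (x⁴ + y⁴) / (x² + y²)` is a strict Lyapunov function. It is a first integral of
the rotational part `f₀`, and along `f` its derivative is the polynomial
`-4 ((x⁴ + y⁴)² + 4 x² y² (x² - y²)²) ≤ -4 V⁴`. Since `(x² + y²) / 2 ≤ V ≤ x² + y²`, monotonicity
of `V` along solutions gives stability, and the differential inequality `V' ≤ -4 V⁴` forces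
`V → 0`, hence `γ → 0`.
-/

open Filter Set Topology

section Decay

variable {u u' : ℝ → ℝ}

lemma antitoneOn_Ici_of_hasDerivAt_nonpos (hu : ∀ t ≥ 0, HasDerivAt u (u' t) t)
    (hu' : ∀ t ≥ 0, u' t ≤ 0) : AntitoneOn u (Ici 0) := by
  refine antitoneOn_of_hasDerivWithinAt_nonpos (f' := u') (convex_Ici 0)
    (fun t ht => (hu t ht).continuousAt.continuousWithinAt) (fun t ht => ?_) (fun t ht => ?_)
  all_goals rw [interior_Ici] at ht
  · exact (hu t ht.le).hasDerivWithinAt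
  · exact hu' t ht.le

/-- If `u ≥ η` held throughout, `u t + c ηⁿ t` would be antitone, so `u` would become negative. -/
lemma exists_lt_of_hasDerivAt_le_neg_mul_pow {c : ℝ} {n : ℕ} (hc : 0 < c)
    (hu : ∀ t ≥ 0, HasDerivAt u (u' t) t) (hu0 : ∀ t ≥ 0, 0 ≤ u t)
    (hu' : ∀ t ≥ 0, u' t ≤ -c * u t ^ n) {η : ℝ} (hη : 0 < η) : ∃ T ≥ 0, u T < η := by
  by_contra! hge
  have hη' : 0 < c * η ^ n := by positivity
  have hanti : AntitoneOn (fun t => u t + c * η ^ n * t) (Ici 0) := by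
    refine antitoneOn_Ici_of_hasDerivAt_nonpos
      (fun t ht => (hu t ht).add ((hasDerivAt_id t).const_mul _)) fun t ht => ?_
    have : c * η ^ n ≤ c * u t ^ n := by gcongr; exact hge t ht
    linarith [hu' t ht]
  set T := (u 0 + 1) / (c * η ^ n)
  have hT : 0 ≤ T := div_nonneg (by linarith [hu0 0 le_rfl]) hη'.le
  have := hanti self_mem_Ici hT hT
  simp only [mul_zero, add_zero, T, mul_div_cancel₀ _ hη'.ne'] at this
  linarith [hu0 T hT]

lemma tendsto_zero_of_hasDerivAt_le_neg_mul_pow {c : ℝ} {n : ℕ} (hc : 0 < c)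
    (hu : ∀ t ≥ 0, HasDerivAt u (u' t) t) (hu0 : ∀ t ≥ 0, 0 ≤ u t)
    (hu' : ∀ t ≥ 0, u' t ≤ -c * u t ^ n) : Tendsto u atTop (𝓝 0) := by
  have hanti := antitoneOn_Ici_of_hasDerivAt_nonpos hu fun t ht =>
    (hu' t ht).trans (by have := hu0 t ht; nlinarith [pow_nonneg this n])
  rw [Metric.tendsto_atTop]
  intro η hη
  obtain ⟨T, hT, huT⟩ := exists_lt_of_hasDerivAt_le_neg_mul_pow hc hu hu0 hu' hη
  refine ⟨T, fun t ht => ?_⟩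
  have ht0 : 0 ≤ t := hT.trans ht
  rw [Real.dist_0_eq_abs, abs_of_nonneg (hu0 t ht0)]
  exact (hanti hT ht0 ht).trans_lt huT

end Decay

lemma sq_norm_le (p : ℝ × ℝ) : ‖p‖ ^ 2 ≤ p.1 ^ 2 + p.2 ^ 2 := by
  rw [Prod.norm_def, Real.norm_eq_abs, Real.norm_eq_abs]
  rcases max_choice |p.1| |p.2| with h | h <;> rw [h, sq_abs] <;>
    linarith [sq_nonneg p.1, sq_nonneg p.2]

lemma le_two_mul_sq_norm (p : ℝ × ℝ) : p.1 ^ 2 + p.2 ^ 2 ≤ 2 * ‖p‖ ^ 2 := by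
  have h1 : p.1 ^ 2 ≤ ‖p‖ ^ 2 := by
    rw [← sq_abs, ← Real.norm_eq_abs]; gcongr; exact norm_fst_le p
  have h2 : p.2 ^ 2 ≤ ‖p‖ ^ 2 := by
    rw [← sq_abs, ← Real.norm_eq_abs]; gcongr; exact norm_snd_le p
  linarith

noncomputable def V (p : ℝ × ℝ) : ℝ := (p.1 ^ 4 + p.2 ^ 4) / (p.1 ^ 2 + p.2 ^ 2)

def lieDerivV (p : ℝ × ℝ) : ℝ :=
  -4 * ((p.1 ^ 4 + p.2 ^ 4) ^ 2 + 4 * p.1 ^ 2 * p.2 ^ 2 * (p.1 ^ 2 - p.2 ^ 2) ^ 2)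

lemma V_nonneg (p : ℝ × ℝ) : 0 ≤ V p := by
  unfold V; positivity

lemma half_le_V (p : ℝ × ℝ) : (p.1 ^ 2 + p.2 ^ 2) / 2 ≤ V p := by
  rcases (add_nonneg (sq_nonneg p.1) (sq_nonneg p.2)).eq_or_lt with hD | hD
  · rw [← hD, zero_div]; exact V_nonneg p
  · rw [V, div_le_div_iff₀ two_pos hD]
    nlinarith [sq_nonneg (p.1 ^ 2 - p.2 ^ 2)]

lemma V_le (p : ℝ × ℝ) : V p ≤ p.1 ^ 2 + p.2 ^ 2 :=
  div_le_of_le_mul₀ (by positivity) (by positivity) (by nlinarith [mul_self_nonneg (p.1 * p.2)])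

lemma sq_V_le (p : ℝ × ℝ) : V p ^ 2 ≤ p.1 ^ 4 + p.2 ^ 4 := by
  rcases (add_nonneg (sq_nonneg p.1) (sq_nonneg p.2)).eq_or_lt with hD | hD
  · rw [V, ← hD, div_zero, zero_pow two_ne_zero]; positivity
  · calc V p ^ 2 = V p * V p := sq _
      _ ≤ V p * (p.1 ^ 2 + p.2 ^ 2) := by gcongr; exacts [V_nonneg p, V_le p]
      _ = p.1 ^ 4 + p.2 ^ 4 := div_mul_cancel₀ _ hD.ne'

lemma lieDerivV_le (p : ℝ × ℝ) : lieDerivV p ≤ -4 * V p ^ 4 := by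
  have h : V p ^ 4 ≤ (p.1 ^ 4 + p.2 ^ 4) ^ 2 := by
    simpa [← pow_mul] using pow_le_pow_left₀ (sq_nonneg _) (sq_V_le p) 2
  unfold lieDerivV
  nlinarith [mul_nonneg (mul_nonneg (sq_nonneg p.1) (sq_nonneg p.2)) (sq_nonneg (p.1 ^ 2 - p.2 ^ 2))]

lemma hasFDerivAt_V_zero : HasFDerivAt V (0 : ℝ × ℝ →L[ℝ] ℝ) 0 := by
  refine Asymptotics.IsBigO.hasFDerivAt (n := 2) (Asymptotics.IsBigO.of_bound 2 ?_) one_lt_two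
  refine Eventually.of_forall fun p => ?_
  rw [sub_zero, Real.norm_eq_abs, abs_of_nonneg (V_nonneg p), norm_pow, norm_norm]
  exact (V_le p).trans (le_two_mul_sq_norm p)

lemma hasDerivAt_V_comp {γ : ℝ → ℝ × ℝ} {t : ℝ} (hγ : HasDerivAt γ (f (γ t)) t) :
    HasDerivAt (fun s => V (γ s)) (lieDerivV (γ t)) t := by
  rcases eq_or_ne (γ t) 0 with h0 | h0
  · have hzero : lieDerivV (γ t) = 0 := by simp [h0, lieDerivV]
    rw [hzero]
    simpa using (h0 ▸ hasFDerivAt_V_zero).comp_hasDerivAt t hγ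
  have hD : (γ t).1 ^ 2 + (γ t).2 ^ 2 ≠ 0 := by
    contrapose! h0
    obtain ⟨h1, h2⟩ := (add_eq_zero_iff_of_nonneg (sq_nonneg _) (sq_nonneg _)).1 h0
    exact Prod.ext (pow_eq_zero_iff two_ne_zero |>.1 h1) (pow_eq_zero_iff two_ne_zero |>.1 h2)
  have hx := hasFDerivAt_fst.comp_hasDerivAt t hγ
  have hy := hasFDerivAt_snd.comp_hasDerivAt t hγ
  refine (((hx.pow 4).add (hy.pow 4)).div ((hx.pow 2).add (hy.pow 2)) hD).congr_deriv ?_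
  simp only [Function.comp_apply, Pi.add_apply, Pi.pow_apply, ContinuousLinearMap.coe_fst',
    ContinuousLinearMap.coe_snd', f, f0, f1, a, b, Prod.fst_add, Prod.snd_add, lieDerivV]
  field_simp
  ring

lemma f_zero : f 0 = 0 := by
  simp [f, f0, f1, a, b]

section Solution

variable {γ : ℝ → ℝ × ℝ}

lemma antitoneOn_V_comp (hγ : ∀ t ≥ 0, HasDerivAt γ (f (γ t)) t) :
    AntitoneOn (fun t => V (γ t)) (Ici 0) :=
  antitoneOn_Ici_of_hasDerivAt_nonpos (fun t ht => hasDerivAt_V_comp (hγ t ht)) fun t _ =>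
    (lieDerivV_le _).trans (by nlinarith [pow_nonneg (V_nonneg (γ t)) 4])

lemma norm_le_two_mul_norm_zero (hγ : ∀ t ≥ 0, HasDerivAt γ (f (γ t)) t) {t : ℝ}
    (ht : 0 ≤ t) : ‖γ t‖ ≤ 2 * ‖γ 0‖ := by
  have hV : V (γ t) ≤ V (γ 0) := antitoneOn_V_comp hγ self_mem_Ici ht ht
  have hsq : ‖γ t‖ ^ 2 ≤ (2 * ‖γ 0‖) ^ 2 := by
    nlinarith [sq_norm_le (γ t), half_le_V (γ t), V_le (γ 0), le_two_mul_sq_norm (γ 0)]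
  exact (pow_le_pow_iff_left₀ (norm_nonneg _) (by positivity) two_ne_zero).1 hsq

lemma tendsto_solution_zero (hγ : ∀ t ≥ 0, HasDerivAt γ (f (γ t)) t) :
    Tendsto γ atTop (𝓝 0) := by
  have hV : Tendsto (fun t => V (γ t)) atTop (𝓝 0) :=
    tendsto_zero_of_hasDerivAt_le_neg_mul_pow four_pos (fun t ht => hasDerivAt_V_comp (hγ t ht))
      (fun t _ => V_nonneg (γ t)) fun t _ => lieDerivV_le (γ t)
  have hsq : Tendsto (fun t => ‖γ t‖ ^ 2) atTop (𝓝 0) := by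
    refine squeeze_zero (fun t => sq_nonneg _) (fun t => ?_) (by simpa using hV.const_mul 2)
    linarith [sq_norm_le (γ t), half_le_V (γ t)]
  rw [tendsto_zero_iff_norm_tendsto_zero]
  simpa [Real.sqrt_sq (norm_nonneg _)] using hsq.sqrt

end Solution

/-- The origin is a globally asymptotically stable equilibrium of `ẋ = f(x)`:
(i) `f(0) = 0`; (ii) Lyapunov stability; (iii) global attractivity. -/
theorem stmt7 :
    f 0 = 0 ∧
    (∀ ε : ℝ, ε > 0 → ∃ δ : ℝ, δ > 0 ∧
      ∀ γ : ℝ → ℝ × ℝ, (∀ t : ℝ, t ≥ 0 → HasDerivAt γ (f (γ t)) t) →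
        ‖γ 0‖ < δ → ∀ t : ℝ, t ≥ 0 → ‖γ t‖ < ε) ∧
    (∀ γ : ℝ → ℝ × ℝ, (∀ t : ℝ, t ≥ 0 → HasDerivAt γ (f (γ t)) t) →
      Filter.Tendsto γ Filter.atTop (nhds 0)) := by
  refine ⟨f_zero, fun ε hε => ⟨ε / 2, by positivity, fun γ hγ h0 t ht => ?_⟩,
    fun γ hγ => tendsto_solution_zero hγ⟩
  linarith [norm_le_two_mul_norm_zero hγ ht]
end

section
/- The vector field f admits no local polynomial Lyapunov function: there do not exist a polynomial function p: ℝ² → ℝ and a real number ε > 0 such that p(0,0) = 0, p(x,y) > 0 for all (x,y) with 0 < ‖(x,y)‖ < ε, and ⟨∇p(x,y), f(x,y)⟩ < 0 for all (x,y) with 0 < ‖(x,y)‖ < ε. -/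
/-!
Suppose `P` were such a Lyapunov function and let `Pₘ` be its lowest nonzero homogeneous
component; `m ≥ 1` because `P (0, 0) = 0`. Since `f = f0 + f1` with `f0`, `f1` homogeneous of
degrees 5 and 7, the lowest homogeneous component of `⟨∇P, f⟩` is `⟨∇Pₘ, f0⟩`, of degree
`m + 4`, and restricting to rays through the origin shows `⟨∇Pₘ, f0⟩ ≤ 0` on the whole plane.
But `f0` has the closed orbit `x² + y² = 2 (x⁴ + y⁴)`, along which `Pₘ` is then nonincreasing,
hence constant, say equal to `K`. By homogeneity `Pₘ² (x² + y²)ᵐ = K² (2 (x⁴ + y⁴))ᵐ`, and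
evaluating at `(1, i)` gives `K = 0`, so `Pₘ = 0`: a contradiction.
-/

open Filter Topology

theorem Polynomial.coeff_nonpos_of_eventually_eval_nonpos {p : Polynomial ℝ} {n : ℕ}
    (hlow : ∀ k < n, p.coeff k = 0) (hp : ∀ᶠ t in 𝓝[>] 0, p.eval t ≤ 0) : p.coeff n ≤ 0 := by
  obtain ⟨q, rfl⟩ := Polynomial.X_pow_dvd_iff.mpr hlow
  rw [Polynomial.coeff_X_pow_mul', if_pos le_rfl, Nat.sub_self,
    Polynomial.coeff_zero_eq_eval_zero]
  have hq : ∀ᶠ t in 𝓝[>] 0, q.eval t ≤ 0 := by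
    filter_upwards [hp, self_mem_nhdsWithin] with t ht (htpos : 0 < t)
    rw [Polynomial.eval_mul, Polynomial.eval_pow, Polynomial.eval_X] at ht
    exact nonpos_of_mul_nonpos_right ht (pow_pos htpos n)
  exact le_of_tendsto (q.continuous.tendsto 0 |>.mono_left nhdsWithin_le_nhds) hq

namespace MvPolynomial

variable {σ R : Type*}

theorem IsHomogeneous.eval_smul [CommSemiring R] {φ : MvPolynomial σ R} {n : ℕ}
    (h : φ.IsHomogeneous n) (c : R) (x : σ → R) : eval (c • x) φ = c ^ n * eval x φ := by
  rw [eval_eq, eval_eq, Finset.mul_sum]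
  refine Finset.sum_congr rfl fun d hd => ?_
  have hdeg : ∑ i ∈ d.support, d i = n := by
    rw [← h (mem_support_iff.mp hd), Finsupp.weight_apply, Finsupp.sum]
    simp
  simp only [Pi.smul_apply, smul_eq_mul, mul_pow, Finset.prod_mul_distrib,
    Finset.prod_pow_eq_pow_sum, hdeg]
  ring

theorem exists_min_homogeneousComponent_ne_zero [CommSemiring R] {P : MvPolynomial σ R}
    (hP : P ≠ 0) :
    ∃ m, homogeneousComponent m P ≠ 0 ∧ ∀ k < m, homogeneousComponent k P = 0 := by
  classical
  have hex : ∃ m, homogeneousComponent m P ≠ 0 := by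
    by_contra! h
    exact hP (by rw [← sum_homogeneousComponent P]; simp [h])
  exact ⟨Nat.find hex, Nat.find_spec hex, fun k hk => not_not.mp (Nat.find_min hex hk)⟩

theorem isHomogeneous_ofNat [CommSemiring R] (n : ℕ) [n.AtLeastTwo] :
    (OfNat.ofNat n : MvPolynomial σ R).IsHomogeneous 0 := by
  rw [← map_ofNat C n]
  exact isHomogeneous_C _ _

theorem exists_polynomial_eval_eq_eval_smul [CommRing R] (Q : MvPolynomial σ R) (x : σ → R) :
    ∃ p : Polynomial R, (∀ t, p.eval t = eval (t • x) Q) ∧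
      ∀ k, p.coeff k = eval x (homogeneousComponent k Q) := by
  classical
  refine ⟨∑ k ∈ Finset.range (Q.totalDegree + 1),
    Polynomial.C (eval x (homogeneousComponent k Q)) * Polynomial.X ^ k, fun t => ?_, fun k => ?_⟩
  · conv_rhs => rw [← sum_homogeneousComponent Q]
    rw [map_sum, Polynomial.eval_finsetSum]
    refine Finset.sum_congr rfl fun k _ => ?_
    rw [(homogeneousComponent_isHomogeneous k Q).eval_smul, Polynomial.eval_mul,
      Polynomial.eval_C, Polynomial.eval_pow, Polynomial.eval_X, mul_comm]
  · simp only [Polynomial.finsetSum_coeff, Polynomial.coeff_C_mul_X_pow, Finset.sum_ite_eq,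
      Finset.mem_range]
    split_ifs with hk
    · rfl
    · rw [homogeneousComponent_eq_zero _ _ (by omega), map_zero]

theorem eval_homogeneousComponent_nonpos {Q : MvPolynomial σ ℝ} {n : ℕ}
    (hlow : ∀ k < n, homogeneousComponent k Q = 0) {x : σ → ℝ}
    (hQ : ∀ᶠ t : ℝ in 𝓝[>] 0, eval (t • x) Q ≤ 0) : eval x (homogeneousComponent n Q) ≤ 0 := by
  obtain ⟨p, hp_eval, hp_coeff⟩ := exists_polynomial_eval_eq_eval_smul Q x
  rw [← hp_coeff]
  refine Polynomial.coeff_nonpos_of_eventually_eval_nonpos (fun k hk => ?_) (by simpa [hp_eval])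
  rw [hp_coeff, hlow k hk, map_zero]

theorem hasFDerivAt_eval {𝕜 : Type*} [NontriviallyNormedField 𝕜] [Fintype σ]
    (P : MvPolynomial σ 𝕜) (x : σ → 𝕜) :
    HasFDerivAt (fun y => eval y P)
      (∑ i, (ContinuousLinearMap.proj (R := 𝕜) i).smulRight (eval x (pderiv i P))) x := by
  classical
  induction P using MvPolynomial.induction_on with
  | C c =>
    simpa using hasFDerivAt_const (𝕜 := 𝕜) c x
  | add p q hp hq =>
    simp only [map_add]
    refine (hp.fun_add hq).congr_fderiv ?_
    ext v
    simp [mul_add, Finset.sum_add_distrib]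
  | mul_X p j hp =>
    refine ((hp.fun_mul (hasFDerivAt_apply (𝕜 := 𝕜) j x)).congr_fderiv ?_).congr_of_eventuallyEq
      (.of_forall fun y => by simp)
    ext v
    simp [pderiv_X, Pi.single_apply, mul_add, Finset.sum_add_distrib, Finset.mul_sum, apply_ite,
      mul_comm, mul_left_comm]

section LieDeriv

variable [CommSemiring R] [Fintype σ]

noncomputable def lieDeriv (F : σ → MvPolynomial σ R) : MvPolynomial σ R →ₗ[R] MvPolynomial σ R :=
  ∑ i, LinearMap.mulLeft R (F i) ∘ₗ (pderiv i).toLinearMap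

theorem lieDeriv_apply (F : σ → MvPolynomial σ R) (P : MvPolynomial σ R) :
    lieDeriv F P = ∑ i, F i * pderiv i P := by
  simp [lieDeriv]

theorem eval_lieDeriv (F : σ → MvPolynomial σ R) (P : MvPolynomial σ R) (x : σ → R) :
    eval x (lieDeriv F P) = ∑ i, eval x (F i) * eval x (pderiv i P) := by
  simp [lieDeriv_apply]

theorem lieDeriv_add (F G : σ → MvPolynomial σ R) (P : MvPolynomial σ R) :
    lieDeriv (F + G) P = lieDeriv F P + lieDeriv G P := by
  simp [lieDeriv_apply, add_mul, Finset.sum_add_distrib]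

variable {F : σ → MvPolynomial σ R} {d : ℕ}

theorem IsHomogeneous.lieDeriv (hF : ∀ i, (F i).IsHomogeneous (d + 1)) {P : MvPolynomial σ R}
    {k : ℕ} (hP : P.IsHomogeneous k) : (lieDeriv F P).IsHomogeneous (k + d) := by
  rw [lieDeriv_apply]
  refine IsHomogeneous.sum _ _ _ fun i _ => ?_
  cases k with
  | zero =>
    rw [← totalDegree_zero_iff_isHomogeneous, totalDegree_eq_zero_iff_eq_C] at hP
    rw [hP, pderiv_C, mul_zero]
    exact isHomogeneous_zero _ _ _
  | succ k =>
    convert (hF i).mul hP.pderiv using 1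
    omega

theorem homogeneousComponent_lieDeriv (hF : ∀ i, (F i).IsHomogeneous (d + 1))
    (P : MvPolynomial σ R) (j : ℕ) :
    homogeneousComponent j (lieDeriv F P) = ∑ k ∈ Finset.range (P.totalDegree + 1),
      if j = k + d then lieDeriv F (homogeneousComponent k P) else 0 := by
  conv_lhs => rw [← sum_homogeneousComponent P]
  rw [map_sum, map_sum]
  exact Finset.sum_congr rfl fun k _ =>
    homogeneousComponent_of_mem ((homogeneousComponent_isHomogeneous k P).lieDeriv hF)

theorem homogeneousComponent_add_lieDeriv (hF : ∀ i, (F i).IsHomogeneous (d + 1))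
    (P : MvPolynomial σ R) (k : ℕ) :
    homogeneousComponent (k + d) (lieDeriv F P) = lieDeriv F (homogeneousComponent k P) := by
  simp only [homogeneousComponent_lieDeriv hF, add_left_inj, Finset.sum_ite_eq, Finset.mem_range]
  split_ifs with hk
  · rfl
  · rw [homogeneousComponent_eq_zero _ _ (by omega), map_zero]

theorem homogeneousComponent_lieDeriv_eq_zero (hF : ∀ i, (F i).IsHomogeneous (d + 1))
    {P : MvPolynomial σ R} {m j : ℕ} (hP : ∀ k < m, homogeneousComponent k P = 0)
    (hj : j < m + d) : homogeneousComponent j (lieDeriv F P) = 0 := by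
  rw [homogeneousComponent_lieDeriv hF]
  refine Finset.sum_eq_zero fun k _ => ?_
  split_ifs with hk
  · rw [hP k (by omega), map_zero]
  · rfl

end LieDeriv

theorem fderiv_eval_pair_apply (P : MvPolynomial (Fin 2) ℝ) (v u : ℝ × ℝ) :
    fderiv ℝ (fun w : ℝ × ℝ => eval ![w.1, w.2] P) v u =
      eval ![v.1, v.2] (pderiv 0 P) * u.1 + eval ![v.1, v.2] (pderiv 1 P) * u.2 := by
  have h := (hasFDerivAt_eval P ![v.1, v.2]).comp v
    (ContinuousLinearEquiv.finTwoArrow ℝ ℝ).symm.hasFDerivAt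
  rw [show (fun w : ℝ × ℝ => eval ![w.1, w.2] P) =
    (fun y => eval y P) ∘ (ContinuousLinearEquiv.finTwoArrow ℝ ℝ).symm from rfl, h.fderiv]
  simp [Fin.sum_univ_two, mul_comm]

end MvPolynomial

open MvPolynomial

noncomputable def aPoly : MvPolynomial (Fin 2) ℝ :=
  2 * X 0 * (X 0 ^ 4 + 2 * X 0 ^ 2 * X 1 ^ 2 - X 1 ^ 4)

noncomputable def bPoly : MvPolynomial (Fin 2) ℝ :=
  2 * X 1 * (-X 0 ^ 4 + 2 * X 0 ^ 2 * X 1 ^ 2 + X 1 ^ 4)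

noncomputable def f0Poly : Fin 2 → MvPolynomial (Fin 2) ℝ := ![-bPoly, aPoly]

noncomputable def f1Poly : Fin 2 → MvPolynomial (Fin 2) ℝ :=
  ![-(X 0 ^ 2 + X 1 ^ 2) * aPoly, -(X 0 ^ 2 + X 1 ^ 2) * bPoly]

theorem isHomogeneous_aPoly : aPoly.IsHomogeneous 5 :=
  have h2 := isHomogeneous_ofNat (σ := Fin 2) (R := ℝ) 2
  (h2.mul (isHomogeneous_X ℝ 0)).mul (((isHomogeneous_X_pow 0 4).add
    ((h2.mul (isHomogeneous_X_pow 0 2)).mul (isHomogeneous_X_pow 1 2))).sub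
      (isHomogeneous_X_pow 1 4))

theorem isHomogeneous_bPoly : bPoly.IsHomogeneous 5 :=
  have h2 := isHomogeneous_ofNat (σ := Fin 2) (R := ℝ) 2
  (h2.mul (isHomogeneous_X ℝ 1)).mul (((isHomogeneous_X_pow 0 4).neg.add
    ((h2.mul (isHomogeneous_X_pow 0 2)).mul (isHomogeneous_X_pow 1 2))).add
      (isHomogeneous_X_pow 1 4))

theorem isHomogeneous_f0Poly (i : Fin 2) : (f0Poly i).IsHomogeneous 5 := by
  fin_cases i
  exacts [isHomogeneous_bPoly.neg, isHomogeneous_aPoly]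

theorem isHomogeneous_f1Poly (i : Fin 2) : (f1Poly i).IsHomogeneous 7 := by
  have hu : (-(X 0 ^ 2 + X 1 ^ 2) : MvPolynomial (Fin 2) ℝ).IsHomogeneous 2 :=
    ((isHomogeneous_X_pow 0 2).add (isHomogeneous_X_pow 1 2)).neg
  fin_cases i
  exacts [hu.mul isHomogeneous_aPoly, hu.mul isHomogeneous_bPoly]

theorem fderiv_eval_apply_f (P : MvPolynomial (Fin 2) ℝ) (v : ℝ × ℝ) :
    fderiv ℝ (fun w : ℝ × ℝ => eval ![w.1, w.2] P) v (f v) =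
      eval ![v.1, v.2] (lieDeriv (f0Poly + f1Poly) P) := by
  rw [fderiv_eval_pair_apply, eval_lieDeriv, Fin.sum_univ_two]
  simp only [f, f0, f1, a, b, f0Poly, f1Poly, aPoly, bPoly, Prod.fst_add, Prod.snd_add,
    Pi.add_apply, Matrix.cons_val_zero, Matrix.cons_val_one, map_add, map_sub, map_neg, map_mul,
    map_pow, eval_ofNat, eval_X]
  ring

open Real

noncomputable def orbitScale (θ : ℝ) : ℝ := √(1 + cos (2 * θ) ^ 2)

-- The curve `x² + y² = 2 (x⁴ + y⁴)` in polar form.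
noncomputable def orbit (θ : ℝ) : Fin 2 → ℝ := ![cos θ / orbitScale θ, sin θ / orbitScale θ]

theorem orbitScale_pos (θ : ℝ) : 0 < orbitScale θ := by
  unfold orbitScale; positivity

theorem orbitScale_sq (θ : ℝ) : orbitScale θ ^ 2 = 1 + cos (2 * θ) ^ 2 := by
  unfold orbitScale; rw [sq_sqrt (by positivity)]

theorem hasDerivAt_orbitScale (θ : ℝ) :
    HasDerivAt orbitScale (-(2 * sin (2 * θ) * cos (2 * θ)) / orbitScale θ) θ := by
  have hc : HasDerivAt (fun θ => cos (2 * θ)) (-sin (2 * θ) * 2) θ := by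
    simpa using ((hasDerivAt_id θ).const_mul 2).cos
  refine (((hc.fun_pow 2).const_add 1).sqrt (by positivity)).congr_deriv ?_
  rw [← orbitScale]
  field_simp
  ring

theorem hasDerivAt_orbit (θ : ℝ) :
    HasDerivAt orbit ((1 + cos (2 * θ) ^ 2) • fun i => eval (orbit θ) (f0Poly i)) θ := by
  have hS := orbitScale_pos θ
  have hS2 := orbitScale_sq θ
  have hpyth := sin_sq_add_cos_sq θ
  rw [cos_two_mul'] at hS2
  rw [hasDerivAt_pi, Fin.forall_fin_two]
  constructor
  · refine ((hasDerivAt_cos θ).div (hasDerivAt_orbitScale θ) hS.ne').congr_deriv ?_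
    simp only [orbit, f0Poly, bPoly, cos_two_mul', sin_two_mul, Pi.smul_apply, smul_eq_mul,
      Matrix.cons_val_zero, Matrix.cons_val_one, map_neg, map_mul, map_add, map_pow, eval_ofNat,
      eval_X]
    field_simp
    linear_combination (-sin θ * (orbitScale θ ^ 2 + 1 + (cos θ ^ 2 - sin θ ^ 2) ^ 2)
      + 4 * sin θ * cos θ ^ 2 * (cos θ ^ 2 - sin θ ^ 2)) * hS2
      + sin θ * (1 + (cos θ ^ 2 - sin θ ^ 2) ^ 2) * (1 + sin θ ^ 2 + cos θ ^ 2) * hpyth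
  · refine ((hasDerivAt_sin θ).div (hasDerivAt_orbitScale θ) hS.ne').congr_deriv ?_
    simp only [orbit, f0Poly, aPoly, cos_two_mul', sin_two_mul, Pi.smul_apply, smul_eq_mul,
      Matrix.cons_val_zero, Matrix.cons_val_one, map_sub, map_mul, map_add, map_pow, eval_ofNat,
      eval_X]
    field_simp
    linear_combination (cos θ * (orbitScale θ ^ 2 + 1 + (cos θ ^ 2 - sin θ ^ 2) ^ 2)
      + 4 * cos θ * sin θ ^ 2 * (cos θ ^ 2 - sin θ ^ 2)) * hS2
      - cos θ * (1 + (cos θ ^ 2 - sin θ ^ 2) ^ 2) * (1 + sin θ ^ 2 + cos θ ^ 2) * hpyth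

theorem orbit_ne_zero (θ : ℝ) : orbit θ ≠ 0 := by
  intro h
  have h0 := congrFun h 0
  have h1 := congrFun h 1
  simp only [orbit, Matrix.cons_val_zero, Matrix.cons_val_one, Pi.zero_apply,
    div_eq_zero_iff, (orbitScale_pos θ).ne', or_false] at h0 h1
  simpa [h0, h1] using sin_sq_add_cos_sq θ

theorem orbit_neg_pi : orbit (-π) = orbit π := by
  simp [orbit, orbitScale]

theorem orbit_sq_add_sq (θ : ℝ) :
    orbit θ 0 ^ 2 + orbit θ 1 ^ 2 = 2 * (orbit θ 0 ^ 4 + orbit θ 1 ^ 4) := by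
  have hS := orbitScale_pos θ
  have hS2 := orbitScale_sq θ
  have hpyth := sin_sq_add_cos_sq θ
  rw [cos_two_mul'] at hS2
  simp only [orbit, Matrix.cons_val_zero, Matrix.cons_val_one]
  field_simp
  linear_combination (cos θ ^ 2 + sin θ ^ 2) * hS2
    + ((cos θ ^ 2 - sin θ ^ 2) ^ 2 - (cos θ ^ 2 + sin θ ^ 2)) * hpyth

theorem exists_eq_smul_orbit (w : Fin 2 → ℝ) :
    ∃ r : ℝ, ∃ θ ∈ Set.Icc (-π) π, w = r • orbit θ := by
  set z : ℂ := ⟨w 0, w 1⟩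
  refine ⟨‖z‖ * orbitScale z.arg, z.arg, ⟨(Complex.neg_pi_lt_arg z).le, Complex.arg_le_pi z⟩, ?_⟩
  have hS := (orbitScale_pos z.arg).ne'
  rw [funext_iff, Fin.forall_fin_two]
  simp only [orbit, Pi.smul_apply, smul_eq_mul, Matrix.cons_val_zero, Matrix.cons_val_one]
  field_simp
  constructor
  · exact (Complex.norm_mul_cos_arg z).symm
  · exact (Complex.norm_mul_sin_arg z).symm

theorem hasDerivAt_eval_orbit (P : MvPolynomial (Fin 2) ℝ) (θ : ℝ) :
    HasDerivAt (fun θ => eval (orbit θ) P)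
      ((1 + cos (2 * θ) ^ 2) * eval (orbit θ) (lieDeriv f0Poly P)) θ := by
  refine ((hasFDerivAt_eval P (orbit θ)).comp_hasDerivAt θ (hasDerivAt_orbit θ)).congr_deriv ?_
  simp [eval_lieDeriv, mul_comm]

theorem eval_orbit_eq_of_lieDeriv_nonpos {P : MvPolynomial (Fin 2) ℝ}
    (hP : ∀ θ, eval (orbit θ) (lieDeriv f0Poly P) ≤ 0) :
    ∀ θ ∈ Set.Icc (-π) π, eval (orbit θ) P = eval (orbit π) P := by
  have hanti : Antitone fun θ => eval (orbit θ) P := by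
    refine antitone_of_deriv_nonpos (fun θ => (hasDerivAt_eval_orbit P θ).differentiableAt)
      fun θ => ?_
    rw [(hasDerivAt_eval_orbit P θ).deriv]
    exact mul_nonpos_of_nonneg_of_nonpos (by positivity) (hP θ)
  intro θ hθ
  refine le_antisymm ?_ (hanti hθ.2)
  simpa [orbit_neg_pi] using hanti hθ.1

theorem eq_zero_of_isHomogeneous_of_eval_orbit_eq {P : MvPolynomial (Fin 2) ℝ} {m : ℕ}
    (hP : P.IsHomogeneous m) (hm : 0 < m) {K : ℝ}
    (hK : ∀ θ ∈ Set.Icc (-π) π, eval (orbit θ) P = K) : P = 0 := by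
  have hid : P ^ 2 * (X 0 ^ 2 + X 1 ^ 2) ^ m = C (K ^ 2) * (2 * (X 0 ^ 4 + X 1 ^ 4)) ^ m := by
    refine MvPolynomial.funext fun w => ?_
    obtain ⟨r, θ, hθ, rfl⟩ := exists_eq_smul_orbit w
    have hquartic := orbit_sq_add_sq θ
    simp only [map_mul, map_pow, map_add, eval_X, eval_C, map_ofNat, hP.eval_smul, hK θ hθ,
      Pi.smul_apply, smul_eq_mul]
    rw [show (r * orbit θ 0) ^ 2 + (r * orbit θ 1) ^ 2 = r ^ 2 * (orbit θ 0 ^ 2 + orbit θ 1 ^ 2)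
      by ring, show 2 * ((r * orbit θ 0) ^ 4 + (r * orbit θ 1) ^ 4)
        = r ^ 4 * (2 * (orbit θ 0 ^ 4 + orbit θ 1 ^ 4)) by ring, hquartic]
    simp only [mul_pow, ← pow_mul]
    ring
  have hK0 : K = 0 := by
    have := congrArg (aeval ![(1 : ℂ), Complex.I]) hid
    simpa [Complex.I_sq, Complex.I_pow_four, hm.ne'] using this.symm
  have hu : (X 0 ^ 2 + X 1 ^ 2 : MvPolynomial (Fin 2) ℝ) ≠ 0 := by
    intro h
    simpa using congrArg (eval ![1, 0]) h
  rw [hK0] at hid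
  simpa [hu] using hid

theorem homogeneousComponent_lieDeriv_f_eq_zero {P : MvPolynomial (Fin 2) ℝ} {m j : ℕ}
    (hP : ∀ k < m, homogeneousComponent k P = 0) (hj : j < m + 4) :
    homogeneousComponent j (lieDeriv (f0Poly + f1Poly) P) = 0 := by
  rw [lieDeriv_add, map_add,
    homogeneousComponent_lieDeriv_eq_zero isHomogeneous_f0Poly hP hj,
    homogeneousComponent_lieDeriv_eq_zero isHomogeneous_f1Poly hP (by omega), add_zero]

theorem homogeneousComponent_lieDeriv_f {P : MvPolynomial (Fin 2) ℝ} {m : ℕ}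
    (hP : ∀ k < m, homogeneousComponent k P = 0) :
    homogeneousComponent (m + 4) (lieDeriv (f0Poly + f1Poly) P) =
      lieDeriv f0Poly (homogeneousComponent m P) := by
  rw [lieDeriv_add, map_add, homogeneousComponent_add_lieDeriv isHomogeneous_f0Poly,
    homogeneousComponent_lieDeriv_eq_zero isHomogeneous_f1Poly hP (by omega), add_zero]

theorem eventually_eval_smul_lieDeriv_f_neg {P : MvPolynomial (Fin 2) ℝ} {ε : ℝ} (hε : 0 < ε)
    (hP : ∀ v : ℝ × ℝ, 0 < ‖v‖ → ‖v‖ < ε →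
      fderiv ℝ (fun w : ℝ × ℝ => eval ![w.1, w.2] P) v (f v) < 0)
    {w : Fin 2 → ℝ} (hw : w ≠ 0) :
    ∀ᶠ t : ℝ in 𝓝[>] 0, eval (t • w) (lieDeriv (f0Poly + f1Poly) P) < 0 := by
  set p : ℝ × ℝ := (w 0, w 1)
  have hp : 0 < ‖p‖ := norm_pos_iff.mpr fun h => hw (by
    ext i; fin_cases i
    exacts [congrArg Prod.fst h, congrArg Prod.snd h])
  filter_upwards [Ioo_mem_nhdsGT (div_pos hε hp)] with t ⟨ht, htε⟩
  have hnorm : ‖t • p‖ = t * ‖p‖ := by rw [norm_smul, Real.norm_of_nonneg ht.le]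
  have hv := hP (t • p) (by rw [hnorm]; positivity) (by rwa [hnorm, ← lt_div_iff₀ hp])
  have hvw : ![(t • p).1, (t • p).2] = t • w := by
    ext i; fin_cases i <;> simp [p]
  rwa [fderiv_eval_apply_f, hvw] at hv

/-- `f` admits no local polynomial Lyapunov function. -/
theorem stmt8 :
    ¬ ∃ (P : MvPolynomial (Fin 2) ℝ) (ε : ℝ), ε > 0 ∧
      (MvPolynomial.eval ![(0 : ℝ), 0] P = 0) ∧
      (∀ v : ℝ × ℝ, 0 < ‖v‖ → ‖v‖ < ε → 0 < MvPolynomial.eval ![v.1, v.2] P) ∧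
      (∀ v : ℝ × ℝ, 0 < ‖v‖ → ‖v‖ < ε →
        fderiv ℝ (fun w : ℝ × ℝ => MvPolynomial.eval ![w.1, w.2] P) v (f v) < 0) := by
  rintro ⟨P, ε, hε, hP0, -, hP⟩
  have hPne : P ≠ 0 := by
    rintro rfl
    have hv : ‖((ε / 2 : ℝ), (0 : ℝ))‖ = ε / 2 := by simp [abs_of_pos hε, (half_pos hε).le]
    simpa using hP (ε / 2, 0) (by rw [hv]; positivity) (by rw [hv]; linarith)
  obtain ⟨m, hm, hlow⟩ := exists_min_homogeneousComponent_ne_zero hPne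
  have hm0 : 0 < m := by
    refine Nat.pos_of_ne_zero fun h => hm ?_
    rw [h, homogeneousComponent_zero, ← constantCoeff_eq, ← eval_zero]
    simpa [show (0 : Fin 2 → ℝ) = ![0, 0] by ext i; fin_cases i <;> rfl] using hP0
  have hlie : ∀ θ, eval (orbit θ) (lieDeriv f0Poly (homogeneousComponent m P)) ≤ 0 := fun θ => by
    rw [← homogeneousComponent_lieDeriv_f hlow]
    exact eval_homogeneousComponent_nonpos (fun _ => homogeneousComponent_lieDeriv_f_eq_zero hlow)
      ((eventually_eval_smul_lieDeriv_f_neg hε hP (orbit_ne_zero θ)).mono fun _ h => h.le)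
  exact hm (eq_zero_of_isHomogeneous_of_eval_orbit_eq (homogeneousComponent_isHomogeneous m P) hm0
    (eval_orbit_eq_of_lieDeriv_nonpos hlie))
end

section
/- W is constant along trajectories of f₀: if γ: ℝ → ℝ² is a differentiable curve satisfying γ'(t) = f₀(γ(t)) for all t ∈ ℝ, then W(γ(t)) = W(γ(0)) for all t ∈ ℝ. In particular, if γ(0) ∈ M then γ(t) ∈ M for all t ∈ ℝ, i.e., M is invariant under the flow of f₀. -/
/-- The `1`-level set of `W`. -/
def M : Set (ℝ × ℝ) := {p : ℝ × ℝ | W p = 1}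

open Asymptotics

theorem hasFDerivAt_zero_of_norm_le_sq {E F : Type*} [NormedAddCommGroup E] [NormedSpace ℝ E]
    [NormedAddCommGroup F] [NormedSpace ℝ F] {f : E → F} {C : ℝ}
    (hf : ∀ x, ‖f x‖ ≤ C * ‖x‖ ^ 2) : HasFDerivAt f (0 : E →L[ℝ] F) 0 := by
  have hf0 : f 0 = 0 := norm_le_zero_iff.mp (by simpa using hf 0)
  rw [hasFDerivAt_iff_isLittleO_nhds_zero]
  simp only [zero_add, hf0, sub_zero, zero_apply]
  exact (IsBigO.of_bound C (.of_forall fun x => by simpa using hf x)).trans_isLittleO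
    (isLittleO_norm_pow_id one_lt_two)

theorem apply_trajectory_eq_apply_zero {E F : Type*} [NormedAddCommGroup E] [NormedSpace ℝ E]
    [NormedAddCommGroup F] [NormedSpace ℝ F] {V : E → F} {f : E → E}
    (hV : ∀ p, ∃ L : E →L[ℝ] F, HasFDerivAt V L p ∧ L (f p) = 0)
    {γ : ℝ → E} (hγ : ∀ t, HasDerivAt γ (f (γ t)) t) (t : ℝ) : V (γ t) = V (γ 0) := by
  have hderiv : ∀ s, HasDerivAt (fun s => V (γ s)) 0 s := fun s => by
    obtain ⟨L, hL, hLf⟩ := hV (γ s)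
    exact hLf ▸ hL.comp_hasDerivAt s (hγ s)
  exact is_const_of_deriv_eq_zero (fun s => (hderiv s).differentiableAt) (fun s => (hderiv s).deriv) t 0

-- The junk value `x / 0 = 0` agrees with the convention `W 0 = 0`.
theorem W_eq_div (p : ℝ × ℝ) : W p = (p.1 ^ 4 + p.2 ^ 4) / (p.1 ^ 2 + p.2 ^ 2) := by
  unfold W
  split_ifs with h
  · simp [h]
  · rfl

theorem abs_W_le (p : ℝ × ℝ) : |W p| ≤ 2 * ‖p‖ ^ 2 := by
  have hx : p.1 ^ 2 ≤ ‖p‖ ^ 2 := by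
    simpa only [Real.norm_eq_abs, sq_abs] using pow_le_pow_left₀ (norm_nonneg _) (norm_fst_le p) 2
  have hy : p.2 ^ 2 ≤ ‖p‖ ^ 2 := by
    simpa only [Real.norm_eq_abs, sq_abs] using pow_le_pow_left₀ (norm_nonneg _) (norm_snd_le p) 2
  have hW : W p ≤ p.1 ^ 2 + p.2 ^ 2 := by
    rw [W_eq_div]
    exact div_le_of_le_mul₀ (by positivity) (by positivity) (by nlinarith [sq_nonneg (p.1 * p.2)])
  rw [abs_of_nonneg (by rw [W_eq_div]; positivity)]
  linarith

theorem hasFDerivAt_W_of_ne_zero {p : ℝ × ℝ} (hp : p ≠ 0) : ∃ L : ℝ × ℝ →L[ℝ] ℝ,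
    HasFDerivAt W L p ∧ ∀ v, L v = ((4 * p.1 ^ 3 * v.1 + 4 * p.2 ^ 3 * v.2) * (p.1 ^ 2 + p.2 ^ 2)
      - (p.1 ^ 4 + p.2 ^ 4) * (2 * p.1 * v.1 + 2 * p.2 * v.2)) / (p.1 ^ 2 + p.2 ^ 2) ^ 2 := by
  have hD : p.1 ^ 2 + p.2 ^ 2 ≠ 0 := by
    contrapose! hp
    rw [add_eq_zero_iff_of_nonneg (sq_nonneg _) (sq_nonneg _), sq_eq_zero_iff, sq_eq_zero_iff] at hp
    exact Prod.ext hp.1 hp.2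
  have hN := ((hasFDerivAt_fst (p := p) (𝕜 := ℝ)).pow 4).add (hasFDerivAt_snd.pow 4)
  have hD' := ((hasFDerivAt_fst (p := p) (𝕜 := ℝ)).pow 2).add (hasFDerivAt_snd.pow 2)
  refine ⟨_, (hN.mul ((hasFDerivAt_inv hD).comp p hD')).congr_of_eventuallyEq
    (.of_forall fun q => ?_), fun v => ?_⟩
  · simp [W_eq_div, div_eq_mul_inv]
  · simp only [Pi.add_apply, Function.comp_apply, add_apply,
      ContinuousLinearMap.comp_apply, smul_apply, ContinuousLinearMap.coe_fst',
      ContinuousLinearMap.coe_snd', ContinuousLinearMap.toSpanSingleton_apply, smul_eq_mul,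
      nsmul_eq_mul]
    field_simp
    ring

theorem quartic_deriv_along_f0 (p : ℝ × ℝ) :
    4 * p.1 ^ 3 * (f0 p).1 + 4 * p.2 ^ 3 * (f0 p).2
      = 8 * p.1 * p.2 * (p.1 ^ 2 - p.2 ^ 2) * (p.1 ^ 4 + p.2 ^ 4) := by
  simp only [f0, a, b]
  ring

theorem sq_deriv_along_f0 (p : ℝ × ℝ) :
    2 * p.1 * (f0 p).1 + 2 * p.2 * (f0 p).2
      = 8 * p.1 * p.2 * (p.1 ^ 2 - p.2 ^ 2) * (p.1 ^ 2 + p.2 ^ 2) := by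
  simp only [f0, a, b]
  ring

theorem exists_hasFDerivAt_W_apply_f0_eq_zero (p : ℝ × ℝ) :
    ∃ L : ℝ × ℝ →L[ℝ] ℝ, HasFDerivAt W L p ∧ L (f0 p) = 0 := by
  rcases eq_or_ne p 0 with rfl | hp
  · exact ⟨0, hasFDerivAt_zero_of_norm_le_sq abs_W_le, rfl⟩
  · obtain ⟨L, hL, hLv⟩ := hasFDerivAt_W_of_ne_zero hp
    refine ⟨L, hL, ?_⟩
    rw [hLv, quartic_deriv_along_f0, sq_deriv_along_f0]
    ring

/-- `W` is constant along trajectories of `f₀`; in particular `M` is invariant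
under the flow of `f₀`. -/
theorem stmt12 :
    ∀ γ : ℝ → ℝ × ℝ, (∀ t : ℝ, HasDerivAt γ (f0 (γ t)) t) →
      (∀ t : ℝ, W (γ t) = W (γ 0)) ∧ (γ 0 ∈ M → ∀ t : ℝ, γ t ∈ M) := by
  intro γ hγ
  have hW := apply_trajectory_eq_apply_zero exists_hasFDerivAt_W_apply_f0_eq_zero hγ
  exact ⟨hW, fun h0 t => (hW t).trans h0⟩
end

section
/- The set M is a periodic orbit of the vector field f₀: there exist a real number T > 0 and a differentiable curve γ: ℝ → ℝ² such that γ'(t) = f₀(γ(t)) for all t ∈ ℝ, γ(t + T) = γ(t) for all t ∈ ℝ, and the image γ(ℝ) equals M. -/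
/-!
On the unit circle `W` equals `w θ = cos⁴ θ + sin⁴ θ`, and `W` is homogeneous of degree two, so
`M` is the star-shaped curve `θ ↦ w(θ)^(-1/2) (cos θ, sin θ)`. Along this curve `f₀` is tangent:
the curve's velocity is `(w θ / 2) • f₀`. Running the angle with speed `2 / w θ`, i.e. inverting
the time `g θ = ∫₀^θ w/2 = 3θ/8 + sin (4θ)/32`, turns it into an integral curve of `f₀`, whose
period is the time `g (2π) = 3π/4` of one full turn.
-/

open Real Filter

theorem exists_periodic_integral_curve_of_reparam {E : Type*} [NormedAddCommGroup E]
    [NormedSpace ℝ E] (F : E → E) (c : ℝ → E) (v g : ℝ → ℝ) (P T : ℝ)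
    (hv : ∀ θ, 0 < v θ) (hg : ∀ θ, HasDerivAt g (v θ) θ) (hg_surj : Function.Surjective g)
    (hc : ∀ θ, HasDerivAt c (v θ • F (c θ)) θ) (hcP : ∀ θ, c (θ + P) = c θ)
    (hgP : ∀ θ, g (θ + P) = g θ + T) :
    ∃ γ : ℝ → E, (∀ t, HasDerivAt γ (F (γ t)) t) ∧ (∀ t, γ (t + T) = γ t) ∧
      Set.range γ = Set.range c := by
  have hg_mono : StrictMono g := strictMono_of_hasDerivAt_pos hg hv
  set τ : ℝ ≃o ℝ := (hg_mono.orderIsoOfSurjective g hg_surj).symm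
  have hgτ (t : ℝ) : g (τ t) = t := hg_mono.orderIsoOfSurjective_self_symm_apply g hg_surj t
  have hτ (t : ℝ) : HasDerivAt τ (v (τ t))⁻¹ t :=
    .of_local_left_inverse τ.continuous.continuousAt (hg (τ t)) (hv _).ne'
      (.of_forall hgτ)
  refine ⟨c ∘ τ, fun t => ?_, fun t => ?_, ?_⟩
  · convert (hc (τ t)).scomp t (hτ t) using 1
    rw [smul_smul, inv_mul_cancel₀ (hv _).ne', one_smul, Function.comp_apply]
  · have hτT : τ (t + T) = τ t + P := hg_mono.injective (by rw [hgτ, hgP, hgτ])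
    simp only [Function.comp_apply, hτT, hcP]
  · rw [Set.range_comp, τ.surjective.range_eq, Set.image_univ]

noncomputable def wCircle (θ : ℝ) : ℝ := cos θ ^ 4 + sin θ ^ 4

theorem wCircle_eq (θ : ℝ) : wCircle θ = (3 + cos (4 * θ)) / 4 := by
  have hcos4 : cos (4 * θ) = 2 * (2 * cos θ ^ 2 - 1) ^ 2 - 1 := by
    rw [show 4 * θ = 2 * (2 * θ) by ring, cos_two_mul, cos_two_mul]
  rw [wCircle, hcos4]
  linear_combination (sin θ ^ 2 - cos θ ^ 2 + 1) * sin_sq_add_cos_sq θ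

theorem wCircle_pos (θ : ℝ) : 0 < wCircle θ := by
  rw [wCircle_eq]; linarith [neg_one_le_cos (4 * θ)]

theorem hasDerivAt_wCircle (θ : ℝ) :
    HasDerivAt wCircle (4 * cos θ ^ 3 * (-sin θ) + 4 * sin θ ^ 3 * cos θ) θ :=
  (((hasDerivAt_cos θ).pow 4).add ((hasDerivAt_sin θ).pow 4)).congr_deriv (by norm_num)

theorem wCircle_add_two_pi (θ : ℝ) : wCircle (θ + 2 * π) = wCircle θ := by
  rw [wCircle, cos_add_two_pi, sin_add_two_pi, wCircle]

theorem W_mul_cos_mul_sin {r : ℝ} (hr : r ≠ 0) (θ : ℝ) :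
    W (r * cos θ, r * sin θ) = r ^ 2 * wCircle θ := by
  have hP := sin_sq_add_cos_sq θ
  have hsq : (r * cos θ) ^ 2 + (r * sin θ) ^ 2 = r ^ 2 := by linear_combination r ^ 2 * hP
  have hne : ((r * cos θ, r * sin θ) : ℝ × ℝ) ≠ 0 := by
    intro h
    have h₁ : r * cos θ = 0 := congrArg Prod.fst h
    have h₂ : r * sin θ = 0 := congrArg Prod.snd h
    rw [h₁, h₂] at hsq
    exact hr (pow_eq_zero_iff two_ne_zero |>.1 (by linarith))
  rw [W, if_neg hne]
  dsimp only
  rw [hsq, div_eq_iff (pow_ne_zero 2 hr), wCircle]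
  ring

noncomputable def orbitTime (θ : ℝ) : ℝ := 3 * θ / 8 + sin (4 * θ) / 32

theorem hasDerivAt_orbitTime (θ : ℝ) : HasDerivAt orbitTime (wCircle θ / 2) θ :=
  ((((hasDerivAt_id θ).const_mul 3).div_const 8).add
    (((hasDerivAt_id θ).const_mul 4).sin.div_const 32)).congr_deriv
    (by rw [wCircle_eq]; simp; ring)

theorem orbitTime_add_two_pi (θ : ℝ) : orbitTime (θ + 2 * π) = orbitTime θ + 3 * π / 4 := by
  have h := sin_add_nat_mul_two_pi (4 * θ) 4
  push_cast at h
  rw [orbitTime, orbitTime, show 4 * (θ + 2 * π) = 4 * θ + 4 * (2 * π) by ring, h]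
  ring

theorem orbitTime_surjective : Function.Surjective orbitTime := by
  have hcont : Continuous orbitTime :=
    continuous_iff_continuousAt.2 fun θ => (hasDerivAt_orbitTime θ).continuousAt
  refine hcont.surjective ?_ ?_
  · refine tendsto_atTop_mono (fun θ => ?_)
      (tendsto_atTop_add_const_right _ (-1 / 32)
        (tendsto_id.const_mul_atTop (by norm_num : (0 : ℝ) < 3 / 8)))
    have := neg_one_le_sin (4 * θ)
    simp only [orbitTime, id]; linarith
  · refine tendsto_atBot_mono (fun θ => ?_)
      (tendsto_atBot_add_const_right _ (1 / 32)
        (tendsto_id.const_mul_atBot (by norm_num : (0 : ℝ) < 3 / 8)))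
    have := sin_le_one (4 * θ)
    simp only [orbitTime, id]; linarith

noncomputable def orbitCurve (θ : ℝ) : ℝ × ℝ :=
  ((√(wCircle θ))⁻¹ * cos θ, (√(wCircle θ))⁻¹ * sin θ)

theorem orbitCurve_add_two_pi (θ : ℝ) : orbitCurve (θ + 2 * π) = orbitCurve θ := by
  rw [orbitCurve, cos_add_two_pi, sin_add_two_pi, wCircle_add_two_pi, orbitCurve]

theorem hasDerivAt_orbitCurve (θ : ℝ) :
    HasDerivAt orbitCurve ((wCircle θ / 2) • f0 (orbitCurve θ)) θ := by
  have hw := wCircle_pos θ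
  have hq : √(wCircle θ) ≠ 0 := (sqrt_pos.2 hw).ne'
  have hρ := ((hasDerivAt_wCircle θ).sqrt hw.ne').inv hq
  refine ((hρ.mul (hasDerivAt_cos θ)).prodMk (hρ.mul (hasDerivAt_sin θ))).congr_deriv ?_
  simp only [orbitCurve, f0, a, b, Prod.smul_mk, smul_eq_mul, Pi.inv_apply]
  have hwq : wCircle θ = √(wCircle θ) ^ 2 := (sq_sqrt hw.le).symm
  generalize √(wCircle θ) = q at hq hwq ⊢
  have hq2 : q ^ 2 = cos θ ^ 4 + sin θ ^ 4 := hwq.symm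
  rw [hwq]
  congr 1 <;> field_simp
  · linear_combination (-2 * sin θ) * hq2
  · linear_combination (2 * cos θ) * hq2

theorem range_orbitCurve : Set.range orbitCurve = M := by
  ext ⟨x, y⟩
  constructor
  · rintro ⟨θ, hθ⟩
    have hq : (√(wCircle θ))⁻¹ ≠ 0 := inv_ne_zero (sqrt_pos.2 (wCircle_pos θ)).ne'
    show W (x, y) = 1
    rw [← hθ, orbitCurve, W_mul_cos_mul_sin hq, inv_pow, sq_sqrt (wCircle_pos θ).le,
      inv_mul_cancel₀ (wCircle_pos θ).ne']
  · intro hW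
    change W (x, y) = 1 at hW
    set z : ℂ := ⟨x, y⟩
    have hz : z ≠ 0 := by
      intro h
      have hx : x = 0 := congrArg Complex.re h
      have hy : y = 0 := congrArg Complex.im h
      simp [W, hx, hy] at hW
    have hpolar : ((x, y) : ℝ × ℝ) = (‖z‖ * cos z.arg, ‖z‖ * sin z.arg) := by
      rw [Complex.norm_mul_cos_arg, Complex.norm_mul_sin_arg]
    rw [hpolar, W_mul_cos_mul_sin (norm_ne_zero_iff.2 hz)] at hW
    have hrw : ‖z‖ = (√(wCircle z.arg))⁻¹ := by
      rw [← sqrt_inv, eq_comm, sqrt_eq_iff_mul_self_eq_of_pos (norm_pos_iff.2 hz)]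
      exact eq_inv_of_mul_eq_one_left (by linear_combination hW)
    exact ⟨z.arg, by rw [hpolar, orbitCurve, hrw]⟩

/-- `M` is a periodic orbit of `f₀`. -/
theorem stmt13 :
    ∃ (T : ℝ) (γ : ℝ → ℝ × ℝ), T > 0 ∧
      (∀ t : ℝ, HasDerivAt γ (f0 (γ t)) t) ∧
      (∀ t : ℝ, γ (t + T) = γ t) ∧
      Set.range γ = M := by
  obtain ⟨γ, hγ, hγT, hγM⟩ := exists_periodic_integral_curve_of_reparam f0 orbitCurve
    (fun θ => wCircle θ / 2) orbitTime (2 * π) (3 * π / 4) (fun θ => half_pos (wCircle_pos θ))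
    hasDerivAt_orbitTime orbitTime_surjective hasDerivAt_orbitCurve orbitCurve_add_two_pi
    orbitTime_add_two_pi
  exact ⟨3 * π / 4, γ, by positivity, hγ, hγT, hγM.trans range_orbitCurve⟩
end

section
/- If p: ℝ² → ℝ is continuously differentiable and satisfies ⟨∇p(x,y), f₀(x,y)⟩ ≤ 0 for all (x,y) ∈ ℝ², then p is constant on M: there exists c ∈ ℝ such that p(x,y) = c for all (x,y) ∈ M. -/
/-!
`M` is the closed curve `θ ↦ r(θ) (cos θ, sin θ)` with `r(θ) = (cos⁴ θ + sin⁴ θ)^(-1/2)`, and along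
it `f₀` is `2 r²` times the velocity, so `f₀` is tangent to `M` and traverses it. Hence `p` is
antitone along this `2π`-periodic parametrisation, and an antitone periodic function is constant.
-/

open Real Function

theorem Function.Periodic.eq_of_antitone {α β : Type*} [AddCommGroup α] [LinearOrder α]
    [IsOrderedAddMonoid α] [Archimedean α] [PartialOrder β] {f : α → β} {c : α}
    (hf : Periodic f c) (hc : 0 < c) (hanti : Antitone f) (s t : α) : f s = f t := by
  wlog hst : s ≤ t generalizing s t
  · exact (this t s (le_of_not_ge hst)).symm
  obtain ⟨n, hn⟩ := Archimedean.arch (t - s) hc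
  refine le_antisymm ?_ (hanti hst)
  calc f s = f (s + n • c) := ((hf.nsmul n) s).symm
    _ ≤ f t := hanti (sub_le_iff_le_add'.mp hn)

theorem Function.Periodic.comp_eq_of_fderiv_nonpos {E : Type*} [NormedAddCommGroup E]
    [NormedSpace ℝ E] {γ γ' : ℝ → E} {p : E → ℝ} {T : ℝ} (hγ : Periodic γ T) (hT : 0 < T)
    (hγ' : ∀ t, HasDerivAt γ (γ' t) t) (hp : Differentiable ℝ p)
    (hnonpos : ∀ t, fderiv ℝ p (γ t) (γ' t) ≤ 0) (s t : ℝ) : p (γ s) = p (γ t) := by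
  have hderiv : ∀ t, HasDerivAt (p ∘ γ) (fderiv ℝ p (γ t) (γ' t)) t := fun t =>
    (hp (γ t)).hasFDerivAt.comp_hasDerivAt t (hγ' t)
  have hanti : Antitone (p ∘ γ) :=
    antitone_of_deriv_nonpos (fun t => (hderiv t).differentiableAt)
      fun t => (hderiv t).deriv ▸ hnonpos t
  exact (hγ.comp p).eq_of_antitone hT hanti s t

noncomputable def polarCurve (r : ℝ → ℝ) (t : ℝ) : ℝ × ℝ := (r t * cos t, r t * sin t)

theorem polarCurve_periodic {r : ℝ → ℝ} (hr : Periodic r (2 * π)) :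
    Periodic (polarCurve r) (2 * π) := fun t => by
  simp only [polarCurve, hr t, cos_add_two_pi, sin_add_two_pi]

theorem hasDerivAt_polarCurve {r : ℝ → ℝ} {r' t : ℝ} (hr : HasDerivAt r r' t) :
    HasDerivAt (polarCurve r) (r' * cos t - r t * sin t, r' * sin t + r t * cos t) t := by
  have hx := hr.mul (hasDerivAt_cos t)
  have hy := hr.mul (hasDerivAt_sin t)
  rw [mul_neg, ← sub_eq_add_neg] at hx
  exact hx.prodMk hy

theorem exists_polar_eq (v : ℝ × ℝ) : ∃ ρ θ : ℝ, 0 ≤ ρ ∧ (ρ * cos θ, ρ * sin θ) = v := by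
  set z := Complex.equivRealProd.symm v
  refine ⟨‖z‖, Complex.arg z, norm_nonneg z, ?_⟩
  have hz := Complex.norm_mul_cos_add_sin_mul_I z
  have hre := congrArg Complex.re hz
  have him := congrArg Complex.im hz
  simp only [Complex.mul_re, Complex.mul_im, Complex.add_re, Complex.add_im] at hre him
  ext <;> simp_all [z]

theorem cos_pow_four_add_sin_pow_four_pos (t : ℝ) : 0 < cos t ^ 4 + sin t ^ 4 := by
  nlinarith [sin_sq_add_cos_sq t, sq_nonneg (cos t ^ 2 - sin t ^ 2)]

theorem W_polar {ρ : ℝ} (θ : ℝ) (hρ : ρ ≠ 0) :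
    W (ρ * cos θ, ρ * sin θ) = ρ ^ 2 * (cos θ ^ 4 + sin θ ^ 4) := by
  have hv : ((ρ * cos θ, ρ * sin θ) : ℝ × ℝ) ≠ 0 := fun h => by
    obtain ⟨hc, hs⟩ := Prod.ext_iff.mp h
    simp only [Prod.fst_zero, Prod.snd_zero, mul_eq_zero, hρ, false_or] at hc hs
    simpa [hc, hs] using sin_sq_add_cos_sq θ
  rw [W, if_neg hv]
  field_simp
  rw [cos_sq_add_sin_sq, mul_one]

noncomputable def levelRadius (t : ℝ) : ℝ := (√(cos t ^ 4 + sin t ^ 4))⁻¹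

theorem levelRadius_pos (t : ℝ) : 0 < levelRadius t :=
  inv_pos.2 (sqrt_pos.2 (cos_pow_four_add_sin_pow_four_pos t))

theorem levelRadius_sq_mul (t : ℝ) : levelRadius t ^ 2 * (cos t ^ 4 + sin t ^ 4) = 1 := by
  rw [levelRadius, inv_pow, sq_sqrt (cos_pow_four_add_sin_pow_four_pos t).le]
  exact inv_mul_cancel₀ (cos_pow_four_add_sin_pow_four_pos t).ne'

theorem levelRadius_eq_of_sq_mul {ρ θ : ℝ} (hρ : 0 < ρ)
    (h : ρ ^ 2 * (cos θ ^ 4 + sin θ ^ 4) = 1) : levelRadius θ = ρ := by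
  rw [levelRadius, ← sqrt_inv, ← eq_inv_of_mul_eq_one_left h, sqrt_sq hρ.le]

theorem levelRadius_periodic : Periodic levelRadius (2 * π) := fun t => by
  simp only [levelRadius, cos_add_two_pi, sin_add_two_pi]

theorem hasDerivAt_levelRadius (t : ℝ) :
    HasDerivAt levelRadius
      (2 * cos t * sin t * (cos t ^ 2 - sin t ^ 2) * levelRadius t ^ 3) t := by
  have hq := cos_pow_four_add_sin_pow_four_pos t
  have hsqrt := (((hasDerivAt_cos t).pow 4).add ((hasDerivAt_sin t).pow 4)).sqrt hq.ne'
  refine (hsqrt.inv (sqrt_pos.2 hq).ne').congr_deriv ?_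
  have hs := (sqrt_pos.2 hq).ne'
  rw [levelRadius]
  simp only [Pi.add_apply, Pi.pow_apply]
  field_simp
  norm_num
  ring

theorem M_subset_range_polarCurve : M ⊆ Set.range (polarCurve levelRadius) := by
  intro v hv
  obtain ⟨ρ, θ, hρ, rfl⟩ := exists_polar_eq v
  have hρ0 : ρ ≠ 0 := by
    rintro rfl
    simp [M, W] at hv
  rw [M, Set.mem_ofPred_eq, W_polar θ hρ0] at hv
  exact ⟨θ, by rw [polarCurve, levelRadius_eq_of_sq_mul (lt_of_le_of_ne hρ (Ne.symm hρ0)) hv]⟩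

theorem hasDerivAt_polarCurve_levelRadius (t : ℝ) :
    HasDerivAt (polarCurve levelRadius)
      ((2 * levelRadius t ^ 2)⁻¹ • f0 (polarCurve levelRadius t)) t := by
  convert hasDerivAt_polarCurve (hasDerivAt_levelRadius t) using 1
  have hr := levelRadius_sq_mul t
  have hr0 := (levelRadius_pos t).ne'
  ext <;> simp only [f0, a, b, polarCurve, Prod.smul_fst, Prod.smul_snd, smul_eq_mul] <;>
    field_simp <;> [linear_combination (-sin t) * hr; linear_combination cos t * hr]

/-- Any `C¹` function whose derivative along `f₀` is nonpositive everywhere is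
constant on `M`. -/
theorem stmt14 (p : ℝ × ℝ → ℝ) (hp : ContDiff ℝ 1 p)
    (hder : ∀ v : ℝ × ℝ, fderiv ℝ p v (f0 v) ≤ 0) :
    ∃ c : ℝ, ∀ v ∈ M, p v = c := by
  refine ⟨p (polarCurve levelRadius 0), fun v hv => ?_⟩
  obtain ⟨t, rfl⟩ := M_subset_range_polarCurve hv
  refine (polarCurve_periodic levelRadius_periodic).comp_eq_of_fderiv_nonpos two_pi_pos
    hasDerivAt_polarCurve_levelRadius (hp.differentiable one_ne_zero) (fun s => ?_) t 0
  rw [map_smul, smul_eq_mul]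
  exact mul_nonpos_of_nonneg_of_nonpos (by positivity) (hder _)
end
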